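/- Let A be a finite alphabet with |A| ≥ 2, f₁ : A → A, f₂ : A × A → A, and let C ⊆ A³ be unambiguous for the Diamond Network with these functions. Then |C| ≤ |A| − 1. -/

import Mathlib

/-!
Write `g x = f₂ x₂ x₃`. Since the first input can be altered freely, `(f₁ a, g x) ∈ Ω(x)` for
every `a`, so two codewords with the same `g`-value have a common output: `g` is injective on `C`
and `|C| ≤ |A|`. If `|C| = |A|`, every value `f₂ b x₃` (resp. `f₂ x₂ b`), which lies in the
second component of `Ω(x)`, is `g y` for some codeword `y`, and unambiguity forces `y = x`. So for
two distinct codewords `x`, `y` the value `f₂ x₂ y₃` equals both `g x` and `g y`, contradicting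
injectivity.
-/

open Finset

/-- Hamming distance on triples. -/
def dH3 {A : Type*} [DecidableEq A] (x y : A × A × A) : ℕ :=
  (if x.1 = y.1 then 0 else 1) + (if x.2.1 = y.2.1 then 0 else 1) +
    (if x.2.2 = y.2.2 then 0 else 1)

/-- The set of possible outputs at the terminal of the Diamond Network. -/
def Omega {A : Type*} [Fintype A] [DecidableEq A] (f₁ : A → A) (f₂ : A → A → A)
    (x : A × A × A) : Finset (A × A) :=
  (Finset.univ.filter fun x' : A × A × A => dH3 x' x ≤ 1).image
    fun x' => (f₁ x'.1, f₂ x'.2.1 x'.2.2)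

/-- An outer code is unambiguous if output sets of distinct codewords are disjoint. -/
def Unambiguous {A : Type*} [Fintype A] [DecidableEq A] (f₁ : A → A) (f₂ : A → A → A)
    (C : Finset (A × A × A)) : Prop :=
  ∀ x ∈ C, ∀ y ∈ C, x ≠ y → Disjoint (Omega f₁ f₂ x) (Omega f₁ f₂ y)

section

variable {A : Type*} [Fintype A] [DecidableEq A] {f₁ : A → A} {f₂ : A → A → A}

lemma mem_Omega_of_dH3_le_one {x x' : A × A × A} (h : dH3 x' x ≤ 1) :
    (f₁ x'.1, f₂ x'.2.1 x'.2.2) ∈ Omega f₁ f₂ x :=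
  mem_image_of_mem _ (mem_filter.2 ⟨mem_univ _, h⟩)

lemma mem_Omega_update_fst (x : A × A × A) (a : A) :
    (f₁ a, f₂ x.2.1 x.2.2) ∈ Omega f₁ f₂ x :=
  mem_Omega_of_dH3_le_one (x' := (a, x.2)) (by simp only [dH3]; split_ifs <;> simp)

lemma mem_Omega_update_snd (x : A × A × A) (b : A) :
    (f₁ x.1, f₂ b x.2.2) ∈ Omega f₁ f₂ x :=
  mem_Omega_of_dH3_le_one (x' := (x.1, b, x.2.2)) (by simp only [dH3]; split_ifs <;> simp)

lemma mem_Omega_update_thd (x : A × A × A) (b : A) :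
    (f₁ x.1, f₂ x.2.1 b) ∈ Omega f₁ f₂ x :=
  mem_Omega_of_dH3_le_one (x' := (x.1, x.2.1, b)) (by simp only [dH3]; split_ifs <;> simp)

namespace Unambiguous

variable {C : Finset (A × A × A)} {x y : A × A × A}

lemma eq_of_mem_Omega (hC : Unambiguous f₁ f₂ C) (hx : x ∈ C) (hy : y ∈ C) {z : A × A}
    (hzx : z ∈ Omega f₁ f₂ x) (hzy : z ∈ Omega f₁ f₂ y) : x = y :=
  by_contra fun hxy => disjoint_left.1 (hC x hx y hy hxy) hzx hzy

lemma eq_of_f₂_eq (hC : Unambiguous f₁ f₂ C) (hx : x ∈ C) (hy : y ∈ C) {v : A}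
    (hv : (f₁ x.1, v) ∈ Omega f₁ f₂ x) (hyv : f₂ y.2.1 y.2.2 = v) : x = y :=
  hC.eq_of_mem_Omega hx hy hv (hyv ▸ mem_Omega_update_fst y x.1)

lemma injOn (hC : Unambiguous f₁ f₂ C) : Set.InjOn (fun x : A × A × A => f₂ x.2.1 x.2.2) C :=
  fun _ hx _ hy hxy => hC.eq_of_f₂_eq hx hy (mem_Omega_update_fst _ _) hxy.symm

lemma card_le (hC : Unambiguous f₁ f₂ C) : C.card ≤ Fintype.card A :=
  card_le_card_of_injOn _ (fun _ _ => mem_coe.2 (mem_univ _)) hC.injOn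

lemma f₂_eq_of_card_eq (hC : Unambiguous f₁ f₂ C) (hcard : C.card = Fintype.card A)
    (hx : x ∈ C) (b : A) : f₂ b x.2.2 = f₂ x.2.1 x.2.2 ∧ f₂ x.2.1 b = f₂ x.2.1 x.2.2 := by
  have hsurj : ∀ v : A, ∃ y ∈ C, f₂ y.2.1 y.2.2 = v := by
    have himage : C.image (fun y => f₂ y.2.1 y.2.2) = univ :=
      eq_univ_of_card _ ((card_image_of_injOn hC.injOn).trans hcard)
    exact fun v => mem_image.1 (himage ▸ mem_univ v)
  obtain ⟨y, hy, hyb⟩ := hsurj (f₂ b x.2.2)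
  obtain ⟨z, hz, hzb⟩ := hsurj (f₂ x.2.1 b)
  obtain rfl := hC.eq_of_f₂_eq hx hy (mem_Omega_update_snd x b) hyb
  obtain rfl := hC.eq_of_f₂_eq hx hz (mem_Omega_update_thd x b) hzb
  exact ⟨hyb.symm, hzb.symm⟩

lemma card_ne_card_of_one_lt (hC : Unambiguous f₁ f₂ C) (hC₁ : 1 < C.card) :
    C.card ≠ Fintype.card A := by
  intro hcard
  obtain ⟨x, hx, y, hy, hxy⟩ := one_lt_card.1 hC₁
  have hgx := (hC.f₂_eq_of_card_eq hcard hx y.2.2).2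
  have hgy := (hC.f₂_eq_of_card_eq hcard hy x.2.1).1
  exact hxy (hC.injOn hx hy (hgx.symm.trans hgy))

end Unambiguous

end

theorem stmt8 {A : Type*} [Fintype A] [DecidableEq A] (hA : 2 ≤ Fintype.card A)
    (f₁ : A → A) (f₂ : A → A → A) (C : Finset (A × A × A))
    (hC : Unambiguous f₁ f₂ C) :
    C.card ≤ Fintype.card A - 1 := by
  have hle := hC.card_le
  by_contra! hlt
  exact hC.card_ne_card_of_one_lt (by omega) (by omega)
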